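/- For any multiplicities 1 ≤ n_1 ≤ n_2 ≤ n_3 ≤ n_4, the new depth of [n_1, n_2, n_3, n_4] equals max{ n_4, min{ n_2 + n_4, n_1 + n_2 + n_3 } }. -/
import Mathlib


/-- The poset `[n₁,…,n_k]`: nonzero vectors `x : Fin k → ℕ` with `x i ≤ n i` for all `i`,
ordered componentwise. -/
def ground {k : ℕ} (n : Fin k → ℕ) : Set (Fin k → ℕ) :=
  {x | x ≠ 0 ∧ ∀ i, x i ≤ n i}

/-- The depth of an element: the sum of its coordinates. -/
def depthv {k : ℕ} (x : Fin k → ℕ) : ℕ := ∑ i, x i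

/-- An interval partition of the poset `[n₁,…,n_k]`: a collection of pairs `(X,Y)` with
`X ≤ Y`, both in the poset, whose intervals `[X,Y] = Set.Icc X Y` are pairwise disjoint
and cover the poset. (Since `X` is nonzero and `Y` is bounded by `n`, each such interval
is a nonempty subset of the poset.) -/
structure IntervalPartition (k : ℕ) (n : Fin k → ℕ) where
  pairs : Set ((Fin k → ℕ) × (Fin k → ℕ))
  bot_mem : ∀ p ∈ pairs, p.1 ∈ ground n
  top_mem : ∀ p ∈ pairs, p.2 ∈ ground n
  bot_le_top : ∀ p ∈ pairs, p.1 ≤ p.2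
  covers : ∀ x ∈ ground n, ∃ p ∈ pairs, x ∈ Set.Icc p.1 p.2
  pairwise_disjoint : ∀ p ∈ pairs, ∀ q ∈ pairs, p ≠ q →
    Disjoint (Set.Icc p.1 p.2) (Set.Icc q.1 q.2)

/-- The new depth of an interval partition: the minimum over its intervals `[X,Y]`
of `depth Y`. -/
noncomputable def ndepthP {k : ℕ} {n : Fin k → ℕ} (P : IntervalPartition k n) : ℕ :=
  sInf ((fun p => depthv p.2) '' P.pairs)

/-- The new depth of the poset `[n₁,…,n_k]`: the maximum of `ndepthP P` over all
interval partitions `P`. -/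
noncomputable def ndepth {k : ℕ} (n : Fin k → ℕ) : ℕ :=
  sSup (Set.range (fun P : IntervalPartition k n => ndepthP P))

/-- For a 0-1 vector `u` (as a Boolean vector), `sVec n u` has `i`-th coordinate `n i`
if `u i = true` and `0` otherwise. -/
def sVec {k : ℕ} (n : Fin k → ℕ) (u : Fin k → Bool) : Fin k → ℕ :=
  fun i => if u i then n i else 0

/-! ### Auxiliary machinery for the four-variable case -/

@[simp] theorem v4_0 (p q r s : ℕ) : ![p,q,r,s] 0 = p := rfl
@[simp] theorem v4_1 (p q r s : ℕ) : ![p,q,r,s] 1 = q := rfl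
@[simp] theorem v4_2 (p q r s : ℕ) : ![p,q,r,s] 2 = r := rfl
@[simp] theorem v4_3 (p q r s : ℕ) : ![p,q,r,s] 3 = s := rfl

theorem forall4 {P : Fin 4 → Prop} (h0 : P 0) (h1 : P 1) (h2 : P 2) (h3 : P 3) : ∀ i, P i := by
  intro i
  obtain ⟨v, hv⟩ := i
  rcases v with _|_|_|_|v
  · exact h0
  · exact h1
  · exact h2
  · exact h3
  · omega

theorem le4 {x y : Fin 4 → ℕ} (h0 : x 0 ≤ y 0) (h1 : x 1 ≤ y 1) (h2 : x 2 ≤ y 2)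
    (h3 : x 3 ≤ y 3) : x ≤ y :=
  forall4 (P := fun i => x i ≤ y i) h0 h1 h2 h3

theorem zero4 {x : Fin 4 → ℕ} (h0 : x 0 = 0) (h1 : x 1 = 0) (h2 : x 2 = 0) (h3 : x 3 = 0) :
    x = 0 :=
  funext (forall4 (P := fun i => x i = (0 : Fin 4 → ℕ) i) h0 h1 h2 h3)

theorem depthv4 (x : Fin 4 → ℕ) : depthv x = x 0 + x 1 + x 2 + x 3 := by
  simp [depthv, Fin.sum_univ_four]

theorem mem_ground4 {n₁ n₂ n₃ n₄ : ℕ} {x : Fin 4 → ℕ}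
    (hne : x 0 ≠ 0 ∨ x 1 ≠ 0 ∨ x 2 ≠ 0 ∨ x 3 ≠ 0)
    (h0 : x 0 ≤ n₁) (h1 : x 1 ≤ n₂) (h2 : x 2 ≤ n₃) (h3 : x 3 ≤ n₄) :
    x ∈ ground ![n₁, n₂, n₃, n₄] := by
  constructor
  · intro h
    rcases hne with h'|h'|h'|h' <;> exact h' (by rw [h]; rfl)
  · exact forall4 (P := fun i => x i ≤ ![n₁,n₂,n₃,n₄] i)
      (by simpa using h0) (by simpa using h1) (by simpa using h2) (by simpa using h3)

theorem disj4 {lo hi lo' hi' : Fin 4 → ℕ} (i : Fin 4)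
    (h : hi i < lo' i ∨ hi' i < lo i) :
    Disjoint (Set.Icc lo hi) (Set.Icc lo' hi') := by
  rw [Set.disjoint_left]
  rintro z hz hz'
  rw [Set.mem_Icc] at hz hz'
  have a1 : lo i ≤ z i := hz.1 i
  have a2 : z i ≤ hi i := hz.2 i
  have a3 : lo' i ≤ z i := hz'.1 i
  have a4 : z i ≤ hi' i := hz'.2 i
  omega

theorem le_ndepthP {k : ℕ} {n : Fin k → ℕ} (P : IntervalPartition k n) (v : ℕ)
    (hne : P.pairs.Nonempty) (h : ∀ p ∈ P.pairs, v ≤ depthv p.2) : v ≤ ndepthP P :=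
  le_csInf (hne.image _) (by rintro _ ⟨p, hp, rfl⟩; exact h p hp)

theorem ndepthP_le {k : ℕ} {n : Fin k → ℕ} (P : IntervalPartition k n) {p}
    (hp : p ∈ P.pairs) : ndepthP P ≤ depthv p.2 :=
  Nat.sInf_le ⟨p, hp, rfl⟩

section Main

variable (n₁ n₂ n₃ n₄ : ℕ)

/-- the 4-box partition witnessing `ndepth ≥ n₄` -/
def PA (h₁ : 1 ≤ n₁) (h₁₂ : n₁ ≤ n₂) (h₂₃ : n₂ ≤ n₃) (h₃₄ : n₃ ≤ n₄) :
    IntervalPartition 4 ![n₁, n₂, n₃, n₄] where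
  pairs := {(![1,0,0,0], ![n₁,n₂,n₃,n₄]), (![0,1,0,0], ![0,n₂,n₃,n₄]),
            (![0,0,1,0], ![0,0,n₃,n₄]), (![0,0,0,1], ![0,0,0,n₄])}
  bot_mem := by
    intro p hp
    simp only [Set.mem_insert_iff, Set.mem_singleton_iff] at hp
    rcases hp with rfl|rfl|rfl|rfl <;>
      exact mem_ground4 (by simp only [v4_0, v4_1, v4_2, v4_3]; omega)
        (by simp only [v4_0]; omega) (by simp only [v4_1]; omega)
        (by simp only [v4_2]; omega) (by simp only [v4_3]; omega)
  top_mem := by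
    intro p hp
    simp only [Set.mem_insert_iff, Set.mem_singleton_iff] at hp
    rcases hp with rfl|rfl|rfl|rfl <;>
      exact mem_ground4 (by simp only [v4_0, v4_1, v4_2, v4_3]; omega)
        (by simp only [v4_0]; omega) (by simp only [v4_1]; omega)
        (by simp only [v4_2]; omega) (by simp only [v4_3]; omega)
  bot_le_top := by
    intro p hp
    simp only [Set.mem_insert_iff, Set.mem_singleton_iff] at hp
    rcases hp with rfl|rfl|rfl|rfl <;>
      exact le4 (by simp only [v4_0]; omega) (by simp only [v4_1]; omega)
        (by simp only [v4_2]; omega) (by simp only [v4_3]; omega)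
  covers := by
    rintro x ⟨hne, hb⟩
    have hb0 : x 0 ≤ n₁ := by simpa using hb 0
    have hb1 : x 1 ≤ n₂ := by simpa using hb 1
    have hb2 : x 2 ≤ n₃ := by simpa using hb 2
    have hb3 : x 3 ≤ n₄ := by simpa using hb 3
    by_cases c0 : x 0 = 0
    · by_cases c1 : x 1 = 0
      · by_cases c2 : x 2 = 0
        · have c3 : x 3 ≠ 0 := fun h => hne (zero4 c0 c1 c2 h)
          refine ⟨(![0,0,0,1], ![0,0,0,n₄]), by simp, Set.mem_Icc.mpr ⟨?_, ?_⟩⟩ <;>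
            exact le4 (by simp only [v4_0]; omega) (by simp only [v4_1]; omega)
              (by simp only [v4_2]; omega) (by simp only [v4_3]; omega)
        · refine ⟨(![0,0,1,0], ![0,0,n₃,n₄]), by simp, Set.mem_Icc.mpr ⟨?_, ?_⟩⟩ <;>
            exact le4 (by simp only [v4_0]; omega) (by simp only [v4_1]; omega)
              (by simp only [v4_2]; omega) (by simp only [v4_3]; omega)
      · refine ⟨(![0,1,0,0], ![0,n₂,n₃,n₄]), by simp, Set.mem_Icc.mpr ⟨?_, ?_⟩⟩ <;>
          exact le4 (by simp only [v4_0]; omega) (by simp only [v4_1]; omega)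
            (by simp only [v4_2]; omega) (by simp only [v4_3]; omega)
    · refine ⟨(![1,0,0,0], ![n₁,n₂,n₃,n₄]), by simp, Set.mem_Icc.mpr ⟨?_, ?_⟩⟩ <;>
        exact le4 (by simp only [v4_0]; omega) (by simp only [v4_1]; omega)
          (by simp only [v4_2]; omega) (by simp only [v4_3]; omega)
  pairwise_disjoint := by
    intro p hp q hq hne
    simp only [Set.mem_insert_iff, Set.mem_singleton_iff] at hp hq
    rcases hp with rfl|rfl|rfl|rfl <;> rcases hq with rfl|rfl|rfl|rfl <;>
      first
        | exact absurd rfl hne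
        | exact disj4 0 (by simp only [v4_0]; omega)
        | exact disj4 1 (by simp only [v4_1]; omega)
        | exact disj4 2 (by simp only [v4_2]; omega)
        | exact disj4 3 (by simp only [v4_3]; omega)

/-- the 6-box partition witnessing `ndepth ≥ min (n₂+n₄) (n₁+n₂+n₃)` -/
def PB (h₁ : 1 ≤ n₁) (h₁₂ : n₁ ≤ n₂) (h₂₃ : n₂ ≤ n₃) (h₃₄ : n₃ ≤ n₄) :
    IntervalPartition 4 ![n₁, n₂, n₃, n₄] where
  pairs := {(![0,1,0,0], ![0,n₂,0,n₄]), (![0,0,0,1], ![0,0,n₃,n₄]),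
            (![0,0,1,0], ![n₁,n₂,n₃,0]), (![1,0,0,0], ![n₁,n₂,0,n₄]),
            (![1,0,1,1], ![n₁,n₂,n₃,n₄]), (![0,1,1,1], ![0,n₂,n₃,n₄])}
  bot_mem := by
    intro p hp
    simp only [Set.mem_insert_iff, Set.mem_singleton_iff] at hp
    rcases hp with rfl|rfl|rfl|rfl|rfl|rfl <;>
      exact mem_ground4 (by simp only [v4_0, v4_1, v4_2, v4_3]; omega)
        (by simp only [v4_0]; omega) (by simp only [v4_1]; omega)
        (by simp only [v4_2]; omega) (by simp only [v4_3]; omega)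
  top_mem := by
    intro p hp
    simp only [Set.mem_insert_iff, Set.mem_singleton_iff] at hp
    rcases hp with rfl|rfl|rfl|rfl|rfl|rfl <;>
      exact mem_ground4 (by simp only [v4_0, v4_1, v4_2, v4_3]; omega)
        (by simp only [v4_0]; omega) (by simp only [v4_1]; omega)
        (by simp only [v4_2]; omega) (by simp only [v4_3]; omega)
  bot_le_top := by
    intro p hp
    simp only [Set.mem_insert_iff, Set.mem_singleton_iff] at hp
    rcases hp with rfl|rfl|rfl|rfl|rfl|rfl <;>
      exact le4 (by simp only [v4_0]; omega) (by simp only [v4_1]; omega)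
        (by simp only [v4_2]; omega) (by simp only [v4_3]; omega)
  covers := by
    rintro x ⟨hne, hb⟩
    have hb0 : x 0 ≤ n₁ := by simpa using hb 0
    have hb1 : x 1 ≤ n₂ := by simpa using hb 1
    have hb2 : x 2 ≤ n₃ := by simpa using hb 2
    have hb3 : x 3 ≤ n₄ := by simpa using hb 3
    by_cases c2 : x 2 = 0
    · by_cases c0 : x 0 = 0
      · by_cases c1 : x 1 = 0
        · have c3 : x 3 ≠ 0 := fun h => hne (zero4 c0 c1 c2 h)
          refine ⟨(![0,0,0,1], ![0,0,n₃,n₄]), by simp, Set.mem_Icc.mpr ⟨?_, ?_⟩⟩ <;>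
            exact le4 (by simp only [v4_0]; omega) (by simp only [v4_1]; omega)
              (by simp only [v4_2]; omega) (by simp only [v4_3]; omega)
        · refine ⟨(![0,1,0,0], ![0,n₂,0,n₄]), by simp, Set.mem_Icc.mpr ⟨?_, ?_⟩⟩ <;>
            exact le4 (by simp only [v4_0]; omega) (by simp only [v4_1]; omega)
              (by simp only [v4_2]; omega) (by simp only [v4_3]; omega)
      · refine ⟨(![1,0,0,0], ![n₁,n₂,0,n₄]), by simp, Set.mem_Icc.mpr ⟨?_, ?_⟩⟩ <;>
          exact le4 (by simp only [v4_0]; omega) (by simp only [v4_1]; omega)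
            (by simp only [v4_2]; omega) (by simp only [v4_3]; omega)
    · by_cases c3 : x 3 = 0
      · refine ⟨(![0,0,1,0], ![n₁,n₂,n₃,0]), by simp, Set.mem_Icc.mpr ⟨?_, ?_⟩⟩ <;>
          exact le4 (by simp only [v4_0]; omega) (by simp only [v4_1]; omega)
            (by simp only [v4_2]; omega) (by simp only [v4_3]; omega)
      · by_cases c0 : x 0 = 0
        · by_cases c1 : x 1 = 0
          · refine ⟨(![0,0,0,1], ![0,0,n₃,n₄]), by simp, Set.mem_Icc.mpr ⟨?_, ?_⟩⟩ <;>
              exact le4 (by simp only [v4_0]; omega) (by simp only [v4_1]; omega)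
                (by simp only [v4_2]; omega) (by simp only [v4_3]; omega)
          · refine ⟨(![0,1,1,1], ![0,n₂,n₃,n₄]), by simp, Set.mem_Icc.mpr ⟨?_, ?_⟩⟩ <;>
              exact le4 (by simp only [v4_0]; omega) (by simp only [v4_1]; omega)
                (by simp only [v4_2]; omega) (by simp only [v4_3]; omega)
        · refine ⟨(![1,0,1,1], ![n₁,n₂,n₃,n₄]), by simp, Set.mem_Icc.mpr ⟨?_, ?_⟩⟩ <;>
            exact le4 (by simp only [v4_0]; omega) (by simp only [v4_1]; omega)
              (by simp only [v4_2]; omega) (by simp only [v4_3]; omega)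
  pairwise_disjoint := by
    intro p hp q hq hne
    simp only [Set.mem_insert_iff, Set.mem_singleton_iff] at hp hq
    rcases hp with rfl|rfl|rfl|rfl|rfl|rfl <;> rcases hq with rfl|rfl|rfl|rfl|rfl|rfl <;>
      first
        | exact absurd rfl hne
        | exact disj4 0 (by simp only [v4_0]; omega)
        | exact disj4 1 (by simp only [v4_1]; omega)
        | exact disj4 2 (by simp only [v4_2]; omega)
        | exact disj4 3 (by simp only [v4_3]; omega)

end Main

section MainProof

variable {n₁ n₂ n₃ n₄ : ℕ}

theorem ndepthP_le_total (h₁ : 1 ≤ n₁)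
    (P : IntervalPartition 4 ![n₁, n₂, n₃, n₄]) :
    ndepthP P ≤ n₁ + n₂ + n₃ + n₄ := by
  obtain ⟨p, hp, hmem⟩ := P.covers ![n₁, n₂, n₃, n₄]
    (mem_ground4 (by simp only [v4_0, v4_1, v4_2, v4_3]; omega)
      (by simp only [v4_0]; omega) (by simp only [v4_1]; omega)
      (by simp only [v4_2]; omega) (by simp only [v4_3]; omega))
  refine le_trans (ndepthP_le P hp) ?_
  have hg := (P.top_mem p hp).2
  have b0 : p.2 0 ≤ n₁ := by simpa using hg 0
  have b1 : p.2 1 ≤ n₂ := by simpa using hg 1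
  have b2 : p.2 2 ≤ n₃ := by simpa using hg 2
  have b3 : p.2 3 ≤ n₄ := by simpa using hg 3
  rw [depthv4]
  omega

theorem ndepthP_le_target (h₁ : 1 ≤ n₁) (h₁₂ : n₁ ≤ n₂) (h₂₃ : n₂ ≤ n₃) (h₃₄ : n₃ ≤ n₄)
    (P : IntervalPartition 4 ![n₁, n₂, n₃, n₄]) :
    ndepthP P ≤ max n₄ (min (n₂ + n₄) (n₁ + n₂ + n₃)) := by
  by_contra hcon
  push_neg at hcon
  have hall : ∀ p ∈ P.pairs,
      max n₄ (min (n₂ + n₄) (n₁ + n₂ + n₃)) + 1 ≤ p.2 0 + p.2 1 + p.2 2 + p.2 3 := by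
    intro p hp
    have h := ndepthP_le P hp
    rw [depthv4] at h
    omega
  have same : ∀ p ∈ P.pairs, ∀ q ∈ P.pairs, ∀ w : Fin 4 → ℕ,
      w ∈ Set.Icc p.1 p.2 → w ∈ Set.Icc q.1 q.2 → p = q := by
    intro p hp q hq w hwp hwq
    by_contra h
    exact Set.disjoint_left.mp (P.pairwise_disjoint p hp q hq h) hwp hwq
  -- the four intervals containing the unit vectors
  obtain ⟨p0, hp0, hm0⟩ := P.covers ![1,0,0,0]
    (mem_ground4 (by simp only [v4_0, v4_1, v4_2, v4_3]; omega)
      (by simp only [v4_0]; omega) (by simp only [v4_1]; omega)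
      (by simp only [v4_2]; omega) (by simp only [v4_3]; omega))
  obtain ⟨p1, hp1, hm1⟩ := P.covers ![0,1,0,0]
    (mem_ground4 (by simp only [v4_0, v4_1, v4_2, v4_3]; omega)
      (by simp only [v4_0]; omega) (by simp only [v4_1]; omega)
      (by simp only [v4_2]; omega) (by simp only [v4_3]; omega))
  obtain ⟨p2, hp2, hm2⟩ := P.covers ![0,0,1,0]
    (mem_ground4 (by simp only [v4_0, v4_1, v4_2, v4_3]; omega)
      (by simp only [v4_0]; omega) (by simp only [v4_1]; omega)
      (by simp only [v4_2]; omega) (by simp only [v4_3]; omega))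
  obtain ⟨p3, hp3, hm3⟩ := P.covers ![0,0,0,1]
    (mem_ground4 (by simp only [v4_0, v4_1, v4_2, v4_3]; omega)
      (by simp only [v4_0]; omega) (by simp only [v4_1]; omega)
      (by simp only [v4_2]; omega) (by simp only [v4_3]; omega))
  -- diagonal entries of the tops are ≥ 1
  have t00 : (1 : ℕ) ≤ p0.2 0 := hm0.2 0
  have t11 : (1 : ℕ) ≤ p1.2 1 := hm1.2 1
  have t22 : (1 : ℕ) ≤ p2.2 2 := hm2.2 2
  have t33 : (1 : ℕ) ≤ p3.2 3 := hm3.2 3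
  -- bounds on the tops
  have B00 : p0.2 0 ≤ n₁ := by simpa using (P.top_mem p0 hp0).2 0
  have B01 : p0.2 1 ≤ n₂ := by simpa using (P.top_mem p0 hp0).2 1
  have B02 : p0.2 2 ≤ n₃ := by simpa using (P.top_mem p0 hp0).2 2
  have B03 : p0.2 3 ≤ n₄ := by simpa using (P.top_mem p0 hp0).2 3
  have B10 : p1.2 0 ≤ n₁ := by simpa using (P.top_mem p1 hp1).2 0
  have B11 : p1.2 1 ≤ n₂ := by simpa using (P.top_mem p1 hp1).2 1
  have B12 : p1.2 2 ≤ n₃ := by simpa using (P.top_mem p1 hp1).2 2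
  have B13 : p1.2 3 ≤ n₄ := by simpa using (P.top_mem p1 hp1).2 3
  have B20 : p2.2 0 ≤ n₁ := by simpa using (P.top_mem p2 hp2).2 0
  have B21 : p2.2 1 ≤ n₂ := by simpa using (P.top_mem p2 hp2).2 1
  have B22 : p2.2 2 ≤ n₃ := by simpa using (P.top_mem p2 hp2).2 2
  have B23 : p2.2 3 ≤ n₄ := by simpa using (P.top_mem p2 hp2).2 3
  have B30 : p3.2 0 ≤ n₁ := by simpa using (P.top_mem p3 hp3).2 0
  have B31 : p3.2 1 ≤ n₂ := by simpa using (P.top_mem p3 hp3).2 1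
  have B32 : p3.2 2 ≤ n₃ := by simpa using (P.top_mem p3 hp3).2 2
  have B33 : p3.2 3 ≤ n₄ := by simpa using (P.top_mem p3 hp3).2 3
  -- depth bounds
  have S0 := hall p0 hp0
  have S1 := hall p1 hp1
  have S2 := hall p2 hp2
  have S3 := hall p3 hp3
  -- the no-2-cycle conditions
  have E01 : p0.2 1 = 0 ∨ p1.2 0 = 0 := by
    by_contra hE
    push_neg at hE
    have hw0 : ![1,1,0,0] ∈ Set.Icc p0.1 p0.2 :=
      ⟨le_trans hm0.1 (le4 (by simp only [v4_0]; omega) (by simp only [v4_1]; omega)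
          (by simp only [v4_2]; omega) (by simp only [v4_3]; omega)),
        le4 (by simp only [v4_0]; omega) (by simp only [v4_1]; omega)
          (by simp only [v4_2]; omega) (by simp only [v4_3]; omega)⟩
    have hw1 : ![1,1,0,0] ∈ Set.Icc p1.1 p1.2 :=
      ⟨le_trans hm1.1 (le4 (by simp only [v4_0]; omega) (by simp only [v4_1]; omega)
          (by simp only [v4_2]; omega) (by simp only [v4_3]; omega)),
        le4 (by simp only [v4_0]; omega) (by simp only [v4_1]; omega)
          (by simp only [v4_2]; omega) (by simp only [v4_3]; omega)⟩
    have heq := same p0 hp0 p1 hp1 _ hw0 hw1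
    have hb0 : p0.1 ≤ ![1,0,0,0] := hm0.1
    have hb1 : p0.1 ≤ ![0,1,0,0] := by rw [heq]; exact hm1.1
    have z0 : p0.1 0 ≤ (0 : ℕ) := hb1 0
    have z1 : p0.1 1 ≤ (0 : ℕ) := hb0 1
    have z2 : p0.1 2 ≤ (0 : ℕ) := hb0 2
    have z3 : p0.1 3 ≤ (0 : ℕ) := hb0 3
    exact (P.bot_mem p0 hp0).1 (zero4 (by omega) (by omega) (by omega) (by omega))
  have E02 : p0.2 2 = 0 ∨ p2.2 0 = 0 := by
    by_contra hE
    push_neg at hE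
    have hw0 : ![1,0,1,0] ∈ Set.Icc p0.1 p0.2 :=
      ⟨le_trans hm0.1 (le4 (by simp only [v4_0]; omega) (by simp only [v4_1]; omega)
          (by simp only [v4_2]; omega) (by simp only [v4_3]; omega)),
        le4 (by simp only [v4_0]; omega) (by simp only [v4_1]; omega)
          (by simp only [v4_2]; omega) (by simp only [v4_3]; omega)⟩
    have hw1 : ![1,0,1,0] ∈ Set.Icc p2.1 p2.2 :=
      ⟨le_trans hm2.1 (le4 (by simp only [v4_0]; omega) (by simp only [v4_1]; omega)
          (by simp only [v4_2]; omega) (by simp only [v4_3]; omega)),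
        le4 (by simp only [v4_0]; omega) (by simp only [v4_1]; omega)
          (by simp only [v4_2]; omega) (by simp only [v4_3]; omega)⟩
    have heq := same p0 hp0 p2 hp2 _ hw0 hw1
    have hb0 : p0.1 ≤ ![1,0,0,0] := hm0.1
    have hb1 : p0.1 ≤ ![0,0,1,0] := by rw [heq]; exact hm2.1
    have z0 : p0.1 0 ≤ (0 : ℕ) := hb1 0
    have z1 : p0.1 1 ≤ (0 : ℕ) := hb0 1
    have z2 : p0.1 2 ≤ (0 : ℕ) := hb0 2
    have z3 : p0.1 3 ≤ (0 : ℕ) := hb0 3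
    exact (P.bot_mem p0 hp0).1 (zero4 (by omega) (by omega) (by omega) (by omega))
  have E03 : p0.2 3 = 0 ∨ p3.2 0 = 0 := by
    by_contra hE
    push_neg at hE
    have hw0 : ![1,0,0,1] ∈ Set.Icc p0.1 p0.2 :=
      ⟨le_trans hm0.1 (le4 (by simp only [v4_0]; omega) (by simp only [v4_1]; omega)
          (by simp only [v4_2]; omega) (by simp only [v4_3]; omega)),
        le4 (by simp only [v4_0]; omega) (by simp only [v4_1]; omega)
          (by simp only [v4_2]; omega) (by simp only [v4_3]; omega)⟩
    have hw1 : ![1,0,0,1] ∈ Set.Icc p3.1 p3.2 :=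
      ⟨le_trans hm3.1 (le4 (by simp only [v4_0]; omega) (by simp only [v4_1]; omega)
          (by simp only [v4_2]; omega) (by simp only [v4_3]; omega)),
        le4 (by simp only [v4_0]; omega) (by simp only [v4_1]; omega)
          (by simp only [v4_2]; omega) (by simp only [v4_3]; omega)⟩
    have heq := same p0 hp0 p3 hp3 _ hw0 hw1
    have hb0 : p0.1 ≤ ![1,0,0,0] := hm0.1
    have hb1 : p0.1 ≤ ![0,0,0,1] := by rw [heq]; exact hm3.1
    have z0 : p0.1 0 ≤ (0 : ℕ) := hb1 0
    have z1 : p0.1 1 ≤ (0 : ℕ) := hb0 1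
    have z2 : p0.1 2 ≤ (0 : ℕ) := hb0 2
    have z3 : p0.1 3 ≤ (0 : ℕ) := hb0 3
    exact (P.bot_mem p0 hp0).1 (zero4 (by omega) (by omega) (by omega) (by omega))
  have E12 : p1.2 2 = 0 ∨ p2.2 1 = 0 := by
    by_contra hE
    push_neg at hE
    have hw0 : ![0,1,1,0] ∈ Set.Icc p1.1 p1.2 :=
      ⟨le_trans hm1.1 (le4 (by simp only [v4_0]; omega) (by simp only [v4_1]; omega)
          (by simp only [v4_2]; omega) (by simp only [v4_3]; omega)),
        le4 (by simp only [v4_0]; omega) (by simp only [v4_1]; omega)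
          (by simp only [v4_2]; omega) (by simp only [v4_3]; omega)⟩
    have hw1 : ![0,1,1,0] ∈ Set.Icc p2.1 p2.2 :=
      ⟨le_trans hm2.1 (le4 (by simp only [v4_0]; omega) (by simp only [v4_1]; omega)
          (by simp only [v4_2]; omega) (by simp only [v4_3]; omega)),
        le4 (by simp only [v4_0]; omega) (by simp only [v4_1]; omega)
          (by simp only [v4_2]; omega) (by simp only [v4_3]; omega)⟩
    have heq := same p1 hp1 p2 hp2 _ hw0 hw1
    have hb0 : p1.1 ≤ ![0,1,0,0] := hm1.1
    have hb1 : p1.1 ≤ ![0,0,1,0] := by rw [heq]; exact hm2.1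
    have z0 : p1.1 0 ≤ (0 : ℕ) := hb0 0
    have z1 : p1.1 1 ≤ (0 : ℕ) := hb1 1
    have z2 : p1.1 2 ≤ (0 : ℕ) := hb0 2
    have z3 : p1.1 3 ≤ (0 : ℕ) := hb0 3
    exact (P.bot_mem p1 hp1).1 (zero4 (by omega) (by omega) (by omega) (by omega))
  have E13 : p1.2 3 = 0 ∨ p3.2 1 = 0 := by
    by_contra hE
    push_neg at hE
    have hw0 : ![0,1,0,1] ∈ Set.Icc p1.1 p1.2 :=
      ⟨le_trans hm1.1 (le4 (by simp only [v4_0]; omega) (by simp only [v4_1]; omega)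
          (by simp only [v4_2]; omega) (by simp only [v4_3]; omega)),
        le4 (by simp only [v4_0]; omega) (by simp only [v4_1]; omega)
          (by simp only [v4_2]; omega) (by simp only [v4_3]; omega)⟩
    have hw1 : ![0,1,0,1] ∈ Set.Icc p3.1 p3.2 :=
      ⟨le_trans hm3.1 (le4 (by simp only [v4_0]; omega) (by simp only [v4_1]; omega)
          (by simp only [v4_2]; omega) (by simp only [v4_3]; omega)),
        le4 (by simp only [v4_0]; omega) (by simp only [v4_1]; omega)
          (by simp only [v4_2]; omega) (by simp only [v4_3]; omega)⟩
    have heq := same p1 hp1 p3 hp3 _ hw0 hw1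
    have hb0 : p1.1 ≤ ![0,1,0,0] := hm1.1
    have hb1 : p1.1 ≤ ![0,0,0,1] := by rw [heq]; exact hm3.1
    have z0 : p1.1 0 ≤ (0 : ℕ) := hb0 0
    have z1 : p1.1 1 ≤ (0 : ℕ) := hb1 1
    have z2 : p1.1 2 ≤ (0 : ℕ) := hb0 2
    have z3 : p1.1 3 ≤ (0 : ℕ) := hb0 3
    exact (P.bot_mem p1 hp1).1 (zero4 (by omega) (by omega) (by omega) (by omega))
  have E23 : p2.2 3 = 0 ∨ p3.2 2 = 0 := by
    by_contra hE
    push_neg at hE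
    have hw0 : ![0,0,1,1] ∈ Set.Icc p2.1 p2.2 :=
      ⟨le_trans hm2.1 (le4 (by simp only [v4_0]; omega) (by simp only [v4_1]; omega)
          (by simp only [v4_2]; omega) (by simp only [v4_3]; omega)),
        le4 (by simp only [v4_0]; omega) (by simp only [v4_1]; omega)
          (by simp only [v4_2]; omega) (by simp only [v4_3]; omega)⟩
    have hw1 : ![0,0,1,1] ∈ Set.Icc p3.1 p3.2 :=
      ⟨le_trans hm3.1 (le4 (by simp only [v4_0]; omega) (by simp only [v4_1]; omega)
          (by simp only [v4_2]; omega) (by simp only [v4_3]; omega)),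
        le4 (by simp only [v4_0]; omega) (by simp only [v4_1]; omega)
          (by simp only [v4_2]; omega) (by simp only [v4_3]; omega)⟩
    have heq := same p2 hp2 p3 hp3 _ hw0 hw1
    have hb0 : p2.1 ≤ ![0,0,1,0] := hm2.1
    have hb1 : p2.1 ≤ ![0,0,0,1] := by rw [heq]; exact hm3.1
    have z0 : p2.1 0 ≤ (0 : ℕ) := hb0 0
    have z1 : p2.1 1 ≤ (0 : ℕ) := hb0 1
    have z2 : p2.1 2 ≤ (0 : ℕ) := hb1 2
    have z3 : p2.1 3 ≤ (0 : ℕ) := hb0 3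
    exact (P.bot_mem p2 hp2).1 (zero4 (by omega) (by omega) (by omega) (by omega))
  omega

end MainProof

/-- for `1 ≤ n₁ ≤ n₂ ≤ n₃ ≤ n₄`, the new depth of `[n₁, n₂, n₃, n₄]` is
`max n₄ (min (n₂ + n₄) (n₁ + n₂ + n₃))`. -/
theorem stmt12 (n₁ n₂ n₃ n₄ : ℕ) (h₁ : 1 ≤ n₁) (h₁₂ : n₁ ≤ n₂) (h₂₃ : n₂ ≤ n₃)
    (h₃₄ : n₃ ≤ n₄) :
    ndepth ![n₁, n₂, n₃, n₄] = max n₄ (min (n₂ + n₄) (n₁ + n₂ + n₃)) := by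
  have hbdd : BddAbove (Set.range (fun P : IntervalPartition 4 ![n₁,n₂,n₃,n₄] => ndepthP P)) := by
    refine ⟨n₁ + n₂ + n₃ + n₄, ?_⟩
    rintro v ⟨P, rfl⟩
    exact ndepthP_le_total h₁ P
  apply le_antisymm
  · have hne : Nonempty (IntervalPartition 4 ![n₁,n₂,n₃,n₄]) := ⟨PA n₁ n₂ n₃ n₄ h₁ h₁₂ h₂₃ h₃₄⟩
    apply csSup_le (Set.range_nonempty _)
    rintro v ⟨P, rfl⟩
    exact ndepthP_le_target h₁ h₁₂ h₂₃ h₃₄ P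
  · apply max_le
    · refine le_trans ?_ (le_csSup hbdd ⟨PA n₁ n₂ n₃ n₄ h₁ h₁₂ h₂₃ h₃₄, rfl⟩)
      apply le_ndepthP _ _ ⟨_, Set.mem_insert _ _⟩
      intro p hp
      rcases hp with rfl|rfl|rfl|rfl <;>
        (rw [depthv4]; simp only [v4_0, v4_1, v4_2, v4_3]; omega)
    · refine le_trans ?_ (le_csSup hbdd ⟨PB n₁ n₂ n₃ n₄ h₁ h₁₂ h₂₃ h₃₄, rfl⟩)
      apply le_ndepthP _ _ ⟨_, Set.mem_insert _ _⟩
      intro p hp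
      rcases hp with rfl|rfl|rfl|rfl|rfl|rfl <;>
        (rw [depthv4]; simp only [v4_0, v4_1, v4_2, v4_3]; omega)
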